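/- arXiv:2605.04990 — 2 statements merged into one kernel-verified Lean document; each statement's English description precedes it below -/
import Mathlib

section
/- For b ≥ 0 and ℓ ∈ ℕ, the string m^ℓ p^{b+ℓ} (i.e., the b+ℓ least significant digits are p and the ℓ most significant digits are m) represents the vector (a, b)^T with a = b(b-1)/2 - ℓ². -/
/-- The Jordan block `[[1,1],[0,1]]`. -/
def M1 : Matrix (Fin 2) (Fin 2) ℤ := !![1, 1; 0, 1]

/-- The digit `p = (0,1)ᵀ`. -/
def pd : Fin 2 → ℤ := ![0, 1]

/-- The digit `m = (0,-1)ᵀ`. -/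
def md : Fin 2 → ℤ := ![0, -1]

/-- The vector represented by the word `d_{k-1} … d_0`, namely `∑ M^i d_i`. -/
def val1 {k : ℕ} (d : Fin k → (Fin 2 → ℤ)) : Fin 2 → ℤ :=
  ∑ i : Fin k, (M1 ^ (i : ℕ)).mulVec (d i)

/-!
Since `M^i = [[1, i], [0, 1]]`, a digit `±p` in position `i` contributes `±(i, 1)`. The second
coordinate therefore counts `(b + ℓ) - ℓ = b`, and by Gauss' formula the first is
`(b + ℓ)(b + ℓ - 1)/2 - (ℓ(b + ℓ) + ℓ(ℓ - 1)/2) = b(b - 1)/2 - ℓ²`.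
-/

open Finset Matrix

lemma M1_pow (n : ℕ) : M1 ^ n = !![1, (n : ℤ); 0, 1] := by
  induction n with
  | zero => simp [one_fin_two]
  | succ n ih =>
    rw [pow_succ, ih, M1, mul_fin_two]
    push_cast
    simp [add_comm]

lemma md_eq_neg_one_smul_pd : md = (-1 : ℤ) • pd := by
  ext j; fin_cases j <;> simp [md, pd]

lemma M1_pow_mulVec_smul_pd (n : ℕ) (c : ℤ) : (M1 ^ n) *ᵥ (c • pd) = ![c * n, c] := by
  rw [M1_pow, pd]
  ext j; fin_cases j <;> simp [mulVec, dotProduct, Fin.sum_univ_two, mul_comm]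

lemma val1_smul_pd {k : ℕ} (c : Fin k → ℤ) :
    val1 (fun i => c i • pd) = ![∑ i, c i * i, ∑ i, c i] := by
  simp only [val1, M1_pow_mulVec_smul_pd]
  ext j
  fin_cases j <;> simp [Finset.sum_apply]

lemma sum_range_add_sign_mul {R : Type*} [Ring R] (n m : ℕ) (f : ℕ → R) :
    ∑ i ∈ range (n + m), (if i < n then 1 else -1) * f i
      = ∑ i ∈ range n, f i - ∑ i ∈ range m, f (n + i) := by
  rw [sum_range_add, sub_eq_add_neg, ← sum_neg_distrib]
  congr 1 <;> refine sum_congr rfl fun i hi => ?_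
  · simp [mem_range.mp hi]
  · simp

lemma two_mul_sum_range_natCast {R : Type*} [CommRing R] (n : ℕ) :
    2 * ∑ i ∈ range n, (i : R) = n * (n - 1) := by
  induction n with
  | zero => simp
  | succ n ih => rw [sum_range_succ, mul_add, ih]; push_cast; ring

theorem stmt2 (b ℓ : ℕ) :
    val1 (fun i : Fin (b + 2 * ℓ) => if (i : ℕ) < b + ℓ then pd else md)
      = ![(b : ℤ) * ((b : ℤ) - 1) / 2 - (ℓ : ℤ) ^ 2, (b : ℤ)] := by
  have hword : (fun i : Fin (b + 2 * ℓ) => if (i : ℕ) < b + ℓ then pd else md)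
      = fun i : Fin (b + 2 * ℓ) => (if (i : ℕ) < b + ℓ then 1 else -1 : ℤ) • pd := by
    funext i; split_ifs <;> simp [md_eq_neg_one_smul_pd]
  have hlen : b + 2 * ℓ = (b + ℓ) + ℓ := by ring
  rw [hword, val1_smul_pd,
    Fin.sum_univ_eq_sum_range (fun i => (if i < b + ℓ then 1 else -1 : ℤ) * i),
    Fin.sum_univ_eq_sum_range (fun i => (if i < b + ℓ then 1 else -1 : ℤ)), hlen,
    sum_range_add_sign_mul]
  have hcount : ∑ i ∈ range (b + ℓ + ℓ), (if i < b + ℓ then 1 else -1 : ℤ) = b := by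
    simpa using sum_range_add_sign_mul (b + ℓ) ℓ (1 : ℕ → ℤ)
  have hweight : ∑ i ∈ range (b + ℓ), (i : ℤ) - ∑ i ∈ range ℓ, ((b + ℓ + i : ℕ) : ℤ)
      = b * (b - 1) / 2 - ℓ ^ 2 := by
    have hb := two_mul_sum_range_natCast (R := ℤ) (b + ℓ)
    have hl := two_mul_sum_range_natCast (R := ℤ) ℓ
    refine eq_sub_of_add_eq (Int.eq_ediv_of_mul_eq_right two_ne_zero ?_)
    simp only [Nat.cast_add, sum_add_distrib, sum_const, card_range, nsmul_eq_mul] at hb ⊢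
    linear_combination hb - hl
  rw [hcount, hweight]
end

section
/- In base M = [[-1,1],[0,-1]] with digits p = (0,1)^T, z = (0,0)^T: for α, β ∈ ℕ, the word (pz)^α pp (zp)^β represents the vector (a, b)^T with b = β - α and a = α² + 2αβ - β² + β + 2α + 1. -/
/-- The Jordan block `[[-1,1],[0,-1]]`. -/
def M2 : Matrix (Fin 2) (Fin 2) ℤ := !![-1, 1; 0, -1]

/-- The zero digit `z = (0,0)ᵀ`. -/
def zd : Fin 2 → ℤ := ![0, 0]

/-- The vector represented by the word `d_{k-1} … d_0`, namely `∑ M^i d_i`. -/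
def val2 {k : ℕ} (d : Fin k → (Fin 2 → ℤ)) : Fin 2 → ℤ :=
  ∑ i : Fin k, (M2 ^ (i : ℕ)).mulVec (d i)

/-- The word `(pz)^α p p (zp)^β`, read with `d_{k-1}` leftmost:
the `2β` least significant digits alternate `… z p z p` (so `p` at even positions),
the next two digits are both `p`, and the `2α` most significant digits alternate
`p z p z …` (so `p` at odd offsets). -/
def wordB (α β : ℕ) : Fin (2 * α + 2 + 2 * β) → (Fin 2 → ℤ) := fun i =>
  if (i : ℕ) < 2 * β then (if Even (i : ℕ) then pd else zd)
  else if (i : ℕ) < 2 * β + 2 then pd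
  else (if Even ((i : ℕ) - (2 * β + 2)) then zd else pd)

/-! Since `M2 ^ i = (-1) ^ i • [[1, -i], [0, 1]]`, the digit `p` at position `i` contributes
`(-1) ^ i • (-i, 1)`. In `(zp)^β` the `p`'s sit at the even positions `2j < 2β`, in `pp` at
`2β, 2β + 1`, and in `(pz)^α` at the odd positions `2(β + 1 + j) + 1`, so each block sums to an
arithmetic series. -/

open Finset Matrix

theorem sum_range_two_mul {A : Type*} [AddCommMonoid A] (f : ℕ → A) (n : ℕ) :
    ∑ i ∈ range (2 * n), f i = ∑ j ∈ range n, (f (2 * j) + f (2 * j + 1)) := by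
  induction n with
  | zero => simp
  | succ n ih =>
    rw [mul_add, mul_one, sum_range_succ, sum_range_succ, sum_range_succ, ih, add_assoc]

lemma M2_pow (i : ℕ) : M2 ^ i = ((-1 : ℤ) ^ i) • !![1, -(i : ℤ); 0, 1] := by
  induction i with
  | zero => simp [one_fin_two]
  | succ n ih =>
    rw [pow_succ, ih, smul_mul, pow_succ, mul_smul]
    congr 1
    ext a b
    fin_cases a <;> fin_cases b <;> simp [M2]; ring

lemma M2_pow_mulVec_pd (i : ℕ) : M2 ^ i *ᵥ pd = ((-1 : ℤ) ^ i) • ![-(i : ℤ), 1] := by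
  ext j
  fin_cases j <;> simp [M2_pow, pd]

lemma M2_pow_mulVec_zd (i : ℕ) : M2 ^ i *ᵥ zd = 0 := by
  simp [zd]

lemma sum_M2_pow_even_mulVec_pd (n : ℕ) :
    ∑ j ∈ range n, M2 ^ (2 * j) *ᵥ pd = ![(n : ℤ) - n ^ 2, n] := by
  induction n with
  | zero => ext j; fin_cases j <;> simp
  | succ n ih =>
    rw [sum_range_succ, ih, M2_pow_mulVec_pd, (even_two_mul n).neg_one_pow, one_smul]
    ext j; fin_cases j <;> simp; ring

lemma sum_M2_pow_odd_mulVec_pd (c n : ℕ) :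
    ∑ j ∈ range n, M2 ^ (2 * (c + j) + 1) *ᵥ pd = ![(n : ℤ) * (2 * c + n), -n] := by
  induction n with
  | zero => ext j; fin_cases j <;> simp
  | succ n ih =>
    rw [sum_range_succ, ih, M2_pow_mulVec_pd, (odd_two_mul_add_one _).neg_one_pow, neg_one_smul]
    ext j; fin_cases j <;> simp <;> ring

def wordDigit (β n : ℕ) : Fin 2 → ℤ :=
  if n < 2 * β then (if Even n then pd else zd)
  else if n < 2 * β + 2 then pd
  else (if Even (n - (2 * β + 2)) then zd else pd)

lemma wordB_eq_wordDigit (α β : ℕ) : wordB α β = fun i : Fin _ => wordDigit β i := rfl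

lemma val2_eq_sum_range {k : ℕ} (d : ℕ → Fin 2 → ℤ) :
    val2 (fun i : Fin k => d i) = ∑ i ∈ range k, M2 ^ i *ᵥ d i :=
  Fin.sum_univ_eq_sum_range (fun i => M2 ^ i *ᵥ d i) k

lemma sum_wordDigit_zp_block (β : ℕ) :
    ∑ i ∈ range (2 * β), M2 ^ i *ᵥ wordDigit β i = ![(β : ℤ) - β ^ 2, β] := by
  rw [sum_range_two_mul, ← sum_M2_pow_even_mulVec_pd]
  refine sum_congr rfl fun j hj => ?_
  have hj : j < β := mem_range.mp hj
  have h0 : wordDigit β (2 * j) = pd := by simp [wordDigit, show 2 * j < 2 * β by omega]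
  have h1 : wordDigit β (2 * j + 1) = zd := by
    simp [wordDigit, show 2 * j + 1 < 2 * β by omega]
  rw [h0, h1, M2_pow_mulVec_zd, add_zero]

lemma sum_wordDigit_pp_block (β : ℕ) :
    ∑ i ∈ range 2, M2 ^ (2 * β + i) *ᵥ wordDigit β (2 * β + i) = ![1, 0] := by
  have h0 : wordDigit β (2 * β) = pd := by simp [wordDigit]
  have h1 : wordDigit β (2 * β + 1) = pd := by simp [wordDigit]
  rw [sum_range_succ, sum_range_one, add_zero, h0, h1, M2_pow_mulVec_pd, M2_pow_mulVec_pd,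
    (even_two_mul β).neg_one_pow, (odd_two_mul_add_one β).neg_one_pow]
  ext j; fin_cases j <;> simp

lemma sum_wordDigit_pz_block (α β : ℕ) :
    ∑ i ∈ range (2 * α), M2 ^ (2 * β + (2 + i)) *ᵥ wordDigit β (2 * β + (2 + i))
      = ![(α : ℤ) * (2 * (β + 1) + α), -α] := by
  rw [sum_range_two_mul, ← Nat.cast_add_one, ← sum_M2_pow_odd_mulVec_pd]
  refine sum_congr rfl fun j _ => ?_
  have h0 : wordDigit β (2 * β + (2 + 2 * j)) = zd := by
    simp [wordDigit, show 2 * β + (2 + 2 * j) - (2 * β + 2) = 2 * j by omega,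
      show ¬ 2 * β + (2 + 2 * j) < 2 * β + 2 by omega]
  have h1 : wordDigit β (2 * β + (2 + (2 * j + 1))) = pd := by
    simp [wordDigit, show 2 * β + (2 + (2 * j + 1)) - (2 * β + 2) = 2 * j + 1 by omega]
  rw [h0, h1, M2_pow_mulVec_zd, zero_add]
  congr 2; ring

theorem stmt14 (α β : ℕ) :
    val2 (wordB α β)
      = ![(α : ℤ) ^ 2 + 2 * (α : ℤ) * (β : ℤ) - (β : ℤ) ^ 2 + (β : ℤ) + 2 * (α : ℤ) + 1,
          (β : ℤ) - (α : ℤ)] := by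
  rw [wordB_eq_wordDigit, val2_eq_sum_range,
    show 2 * α + 2 + 2 * β = 2 * β + (2 + 2 * α) by ring, sum_range_add, sum_range_add,
    sum_wordDigit_zp_block, sum_wordDigit_pp_block, sum_wordDigit_pz_block]
  ext j; fin_cases j <;> simp <;> ring
end
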